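/- arXiv:1812.09898 — 2 statements merged into one kernel-verified Lean document; each statement's English description precedes it below -/
import Mathlib

section
/- Let m ≥ 2, α ≥ 1 and λ ≤ α be real numbers, and let B ⊆ ℝ^{m-1} be a nonempty bounded open set for which there is C₀ > 0 such that ∫_B |v|² dy ≤ C₀ ∫_B |∇v|² dy for every smooth v : ℝ^{m-1} → ℝ that vanishes on the frontier of B. Let K := K_α^m(B) be the model cusp of order α. Then for every smooth u : ℝ^m → ℝ whose support is a compact subset of {(r, r^α y) : 0 < r < 1, y ∈ closure(B)} and which vanishes at every point (r, r^α y) with 0 < r < 1 and y in the frontier of B, one has the Hardy–Poincaré inequality ∫_K x₁^{-2λ} |u(x)|² dx ≤ C₀ ∫_K |∇u(x)|² dx. -/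
open MeasureTheory Real

/-- The first coordinate `x₁` of a point `x ∈ ℝᵐ`. -/
noncomputable def firstCoord {m : ℕ} (x : EuclideanSpace ℝ (Fin m)) : ℝ :=
  if h : 0 < m then x ⟨0, h⟩ else 0

/-- The model cusp `K_α^m(B) = {(r, r^α y) : 0 < r < 1, y ∈ B}` of order `α`, where
`B ⊆ ℝ^{m-1}`. -/
def modelCusp (m : ℕ) (α : ℝ) (B : Set (EuclideanSpace ℝ (Fin (m - 1)))) :
    Set (EuclideanSpace ℝ (Fin m)) :=
  {x | ∃ r : ℝ, ∃ y ∈ B, 0 < r ∧ r < 1 ∧ ∀ j : Fin m,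
      x j = if hj : j.1 = 0 then r else r ^ α * y ⟨j.1 - 1, by have := j.2; omega⟩}

open Set Pointwise

noncomputable def toE {k : ℕ} (p : ℝ × EuclideanSpace ℝ (Fin k)) :
    EuclideanSpace ℝ (Fin (k + 1)) :=
  WithLp.toLp 2 (Fin.cons p.1 p.2.ofLp : Fin (k + 1) → ℝ)

lemma toE_zero {k : ℕ} (p : ℝ × EuclideanSpace ℝ (Fin k)) : toE p 0 = p.1 := rfl

lemma toE_succ {k : ℕ} (p : ℝ × EuclideanSpace ℝ (Fin k)) (i : Fin k) :
    toE p i.succ = p.2 i := rfl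

lemma firstCoord_toE {k : ℕ} (p : ℝ × EuclideanSpace ℝ (Fin k)) :
    firstCoord (toE p) = p.1 := by
  have h : 0 < k + 1 := Nat.succ_pos k
  simp only [firstCoord, dif_pos h]
  exact toE_zero p

lemma mem_cusp_iff {k : ℕ} (α : ℝ) (B : Set (EuclideanSpace ℝ (Fin k))) (r : ℝ)
    (x' : EuclideanSpace ℝ (Fin k)) :
    toE (r, x') ∈ modelCusp (k + 1) α B ↔
      (r ∈ Set.Ioo (0 : ℝ) 1 ∧ ∃ y ∈ B, x' = (r ^ α) • y) := by
  constructor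
  · rintro ⟨r', y, hy, h0, h1, hco⟩
    have hr : r = r' := by simpa [toE_zero] using hco 0
    subst hr
    refine ⟨⟨h0, h1⟩, y, hy, ?_⟩
    ext i
    have := hco i.succ
    have hne : (i.succ : Fin (k + 1)).1 ≠ 0 := Nat.succ_ne_zero _
    rw [dif_neg hne] at this
    rw [toE_succ] at this
    simp only [PiLp.smul_apply, smul_eq_mul]
    exact this
  · rintro ⟨⟨h0, h1⟩, y, hy, rfl⟩
    refine ⟨r, y, hy, h0, h1, fun j => ?_⟩
    induction j using Fin.cases with
    | zero => simp [toE_zero]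
    | succ i =>
      have hne : (i.succ : Fin (k + 1)).1 ≠ 0 := Nat.succ_ne_zero _
      rw [dif_neg hne, toE_succ]
      rfl

lemma slice_empty {k : ℕ} (α : ℝ) (B : Set (EuclideanSpace ℝ (Fin k))) {r : ℝ}
    (hr : r ∉ Set.Ioo (0 : ℝ) 1) :
    {x' : EuclideanSpace ℝ (Fin k) | toE (r, x') ∈ modelCusp (k + 1) α B} = ∅ := by
  ext x'
  simp only [Set.mem_setOf_eq, mem_cusp_iff, Set.mem_empty_iff_false, iff_false]
  rintro ⟨h, -⟩
  exact hr h

lemma slice_smul {k : ℕ} (α : ℝ) (B : Set (EuclideanSpace ℝ (Fin k))) {r : ℝ}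
    (hr : r ∈ Set.Ioo (0 : ℝ) 1) :
    {x' : EuclideanSpace ℝ (Fin k) | toE (r, x') ∈ modelCusp (k + 1) α B} = (r ^ α) • B := by
  ext x'
  simp only [Set.mem_setOf_eq, mem_cusp_iff, hr, true_and]
  constructor
  · rintro ⟨y, hy, rfl⟩; exact ⟨y, hy, rfl⟩
  · rintro ⟨y, hy, rfl⟩; exact ⟨y, hy, rfl⟩

lemma toE_eq_self {k : ℕ} (x : EuclideanSpace ℝ (Fin (k + 1))) :
    toE (x 0, WithLp.toLp 2 (fun i : Fin k => x i.succ)) = x := by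
  ext j
  induction j using Fin.cases with
  | zero => rfl
  | succ i => rfl

lemma cusp_open {k : ℕ} (α : ℝ) (B : Set (EuclideanSpace ℝ (Fin k))) (hB : IsOpen B) :
    IsOpen (modelCusp (k + 1) α B) := by
  have hKeq : modelCusp (k + 1) α B =
      {x : EuclideanSpace ℝ (Fin (k + 1))| x 0 ∈ Set.Ioo (0:ℝ) 1} ∩
        (fun x : EuclideanSpace ℝ (Fin (k + 1)) =>
          ((x 0 : ℝ) ^ α)⁻¹ • WithLp.toLp 2 (fun i : Fin k => x i.succ)) ⁻¹' B := by
    ext x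
    have hc : ∀ hx : x 0 ∈ Set.Ioo (0:ℝ) 1, ((x 0 : ℝ) ^ α) ≠ 0 := fun hx => by
      have : (0:ℝ) < x 0 := hx.1
      positivity
    conv_lhs => rw [← toE_eq_self x, mem_cusp_iff]
    constructor
    · rintro ⟨hIoo, y, hy, hx'⟩
      refine ⟨hIoo, ?_⟩
      simp only [Set.mem_preimage]
      rw [hx', inv_smul_smul₀ (hc hIoo)]
      exact hy
    · rintro ⟨hIoo, hPre⟩
      exact ⟨hIoo, _, hPre, (smul_inv_smul₀ (hc hIoo) _).symm⟩
  rw [hKeq]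
  apply ContinuousOn.isOpen_inter_preimage (s := _) (t := B) ?_ ?_ hB
  · apply ContinuousOn.smul (f := fun x : EuclideanSpace ℝ (Fin (k + 1)) => ((x 0 : ℝ) ^ α)⁻¹)
      (g := fun x : EuclideanSpace ℝ (Fin (k + 1)) => WithLp.toLp 2 (fun i : Fin k => x i.succ))
    · apply ContinuousOn.inv₀
      · apply ContinuousOn.rpow_const
        · exact (PiLp.continuous_apply 2 _ _).continuousOn
        · intro x hx
          exact Or.inl (ne_of_gt hx.1)
      · intro x hx
        have : (0:ℝ) < x 0 := hx.1
        positivity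
    · apply Continuous.continuousOn
      exact (PiLp.continuous_toLp 2 _).comp (continuous_pi fun i => PiLp.continuous_apply 2 _ _)
  · exact (PiLp.continuous_apply 2 _ (0 : Fin (k+1))).isOpen_preimage _ isOpen_Ioo

lemma toE_eq_comp {k : ℕ} :
    (toE : ℝ × EuclideanSpace ℝ (Fin k) → EuclideanSpace ℝ (Fin (k + 1))) =
      (((MeasurableEquiv.toLp 2 (Fin (k + 1) → ℝ)).symm).symm ∘
        (MeasurableEquiv.piFinSuccAbove (fun _ : Fin (k + 1) => ℝ) 0).symm) ∘
        (Prod.map (id : ℝ → ℝ) ((MeasurableEquiv.toLp 2 (Fin k → ℝ)).symm)) := by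
  funext p
  show toE p = ((MeasurableEquiv.toLp 2 (Fin (k + 1) → ℝ)).symm).symm
    ((MeasurableEquiv.piFinSuccAbove (fun _ : Fin (k + 1) => ℝ) 0).symm
      (p.1, (MeasurableEquiv.toLp 2 (Fin k → ℝ)).symm p.2))
  ext j
  induction j using Fin.cases with
  | zero =>
    simp [MeasurableEquiv.piFinSuccAbove, MeasurableEquiv.coe_toLp, toE_zero]
  | succ i =>
    simp [MeasurableEquiv.piFinSuccAbove, MeasurableEquiv.coe_toLp, toE_succ]

lemma measurePreserving_toE {k : ℕ} :
    MeasurePreserving (toE : ℝ × EuclideanSpace ℝ (Fin k) → EuclideanSpace ℝ (Fin (k + 1)))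
      volume volume := by
  rw [toE_eq_comp]
  have h1 : MeasurePreserving
      (Prod.map (id : ℝ → ℝ) ((MeasurableEquiv.toLp 2 (Fin k → ℝ)).symm)) volume volume :=
    (MeasurePreserving.id _).prod (EuclideanSpace.volume_preserving_symm_measurableEquiv_toLp (Fin k))
  have h2 : MeasurePreserving
      ((MeasurableEquiv.piFinSuccAbove (fun _ : Fin (k + 1) => ℝ) 0).symm) volume volume :=
    (volume_preserving_piFinSuccAbove (fun _ : Fin (k + 1) => ℝ) 0).symm
  have h3 : MeasurePreserving (((MeasurableEquiv.toLp 2 (Fin (k + 1) → ℝ)).symm).symm)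
      volume volume :=
    (EuclideanSpace.volume_preserving_symm_measurableEquiv_toLp (Fin (k + 1))).symm
  exact (h3.comp h2).comp h1

lemma measurableEmbedding_toE {k : ℕ} :
    MeasurableEmbedding (toE : ℝ × EuclideanSpace ℝ (Fin k) → EuclideanSpace ℝ (Fin (k + 1))) := by
  rw [toE_eq_comp]
  exact ((((MeasurableEquiv.toLp 2 (Fin (k + 1) → ℝ)).symm).symm.measurableEmbedding.comp
    (MeasurableEquiv.piFinSuccAbove (fun _ : Fin (k + 1) => ℝ) 0).symm.measurableEmbedding).comp
    ((MeasurableEquiv.refl ℝ).prodCongr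
      ((MeasurableEquiv.toLp 2 (Fin k → ℝ)).symm)).measurableEmbedding)

noncomputable def Jmap (k : ℕ) :
    EuclideanSpace ℝ (Fin k) →ₗᵢ[ℝ] EuclideanSpace ℝ (Fin (k + 1)) where
  toFun y := toE (0, y)
  map_add' a b := by
    ext j
    induction j using Fin.cases with
    | zero => show (0:ℝ) = 0 + 0; ring
    | succ i => show (a + b) i = toE (0, a) i.succ + toE (0, b) i.succ; rfl
  map_smul' c a := by
    ext j
    induction j using Fin.cases with
    | zero => show (0:ℝ) = c * 0; ring
    | succ i => show (c • a) i = c * toE (0, a) i.succ; rfl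
  norm_map' y := by
    rw [EuclideanSpace.norm_eq, EuclideanSpace.norm_eq]
    congr 1
    rw [Fin.sum_univ_succ]
    simp [toE_zero, toE_succ]

lemma toE_decomp {k : ℕ} (r : ℝ) (x' : EuclideanSpace ℝ (Fin k)) :
    toE (r, x') = toE (r, 0) + Jmap k x' := by
  ext j
  induction j using Fin.cases with
  | zero => show r = r + 0; ring
  | succ i => show x' i = (0:ℝ) + x' i; ring

section chain

variable {k : ℕ} {u : EuclideanSpace ℝ (Fin (k + 1)) → ℝ} (r c : ℝ)

lemma v_eq_comp : (fun y : EuclideanSpace ℝ (Fin k) => u (toE (r, c • y))) =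
    u ∘ (fun y => toE (r, 0) + (c • (Jmap k).toContinuousLinearMap) y) := by
  funext y
  simp only [Function.comp_apply, ContinuousLinearMap.smul_apply,
    LinearIsometry.coe_toContinuousLinearMap]
  rw [toE_decomp r (c • y), (Jmap k).map_smul]

lemma v_contDiff (hu : ContDiff ℝ (⊤ : ℕ∞) u) : ContDiff ℝ (⊤ : ℕ∞) (fun y : EuclideanSpace ℝ (Fin k) => u (toE (r, c • y))) := by
  rw [v_eq_comp (u := u) r c]
  exact hu.comp (contDiff_const.add (c • (Jmap k).toContinuousLinearMap).contDiff)

lemma v_fderiv_norm_le (hu : ContDiff ℝ (⊤ : ℕ∞) u) (y : EuclideanSpace ℝ (Fin k)) :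
    ‖fderiv ℝ (fun y : EuclideanSpace ℝ (Fin k) => u (toE (r, c • y))) y‖ ≤
      |c| * ‖fderiv ℝ u (toE (r, c • y))‖ := by
  set A : EuclideanSpace ℝ (Fin k) →L[ℝ] EuclideanSpace ℝ (Fin (k + 1)) :=
    c • (Jmap k).toContinuousLinearMap with hA
  have hφ : HasFDerivAt (fun y => toE (r, 0) + A y) A y := (A.hasFDerivAt).const_add _
  have hz : toE (r, 0) + A y = toE (r, c • y) := by
    rw [toE_decomp r (c • y), (Jmap k).map_smul]
    rfl
  have hDu : HasFDerivAt u (fderiv ℝ u (toE (r, c • y))) (toE (r, 0) + A y) := by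
    rw [hz]
    exact (hu.differentiable (by simp) (toE (r, c • y))).hasFDerivAt
  have hv : HasFDerivAt (fun y : EuclideanSpace ℝ (Fin k) => u (toE (r, c • y)))
      ((fderiv ℝ u (toE (r, c • y))).comp A) y := by
    rw [v_eq_comp (u := u) r c]
    exact hDu.comp y hφ
  rw [hv.fderiv]
  calc ‖(fderiv ℝ u (toE (r, c • y))).comp A‖
      ≤ ‖fderiv ℝ u (toE (r, c • y))‖ * ‖A‖ := ContinuousLinearMap.opNorm_comp_le _ _
    _ ≤ ‖fderiv ℝ u (toE (r, c • y))‖ * |c| := by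
        apply mul_le_mul_of_nonneg_left _ (norm_nonneg _)
        apply ContinuousLinearMap.opNorm_le_bound _ (abs_nonneg c)
        intro x
        rw [hA]
        simp only [ContinuousLinearMap.smul_apply, LinearIsometry.coe_toContinuousLinearMap,
          norm_smul, Real.norm_eq_abs, (Jmap k).norm_map]
        exact le_refl _
    _ = |c| * ‖fderiv ℝ u (toE (r, c • y))‖ := mul_comm _ _

end chain

lemma slice_ineq {k : ℕ} (α lam : ℝ) (hα : 1 ≤ α) (hlam : lam ≤ α)
    (B : Set (EuclideanSpace ℝ (Fin k))) (hBbdd : Bornology.IsBounded B)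
    (hBmeas : MeasurableSet B) (C₀ : ℝ) (hC₀ : 0 < C₀)
    (hPoincare : ∀ v : EuclideanSpace ℝ (Fin k) → ℝ, ContDiff ℝ (⊤ : ℕ∞) v →
      (∀ y ∈ frontier B, v y = 0) →
      ∫ y in B, (v y) ^ 2 ≤ C₀ * ∫ y in B, ‖fderiv ℝ v y‖ ^ 2)
    (u : EuclideanSpace ℝ (Fin (k + 1)) → ℝ) (hu : ContDiff ℝ (⊤ : ℕ∞) u)
    (hvan : ∀ x ∈ modelCusp (k + 1) α (frontier B), u x = 0)
    {r : ℝ} (hr : r ∈ Set.Ioo (0 : ℝ) 1) :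
    ∫ x' in (r ^ α) • B, (firstCoord (toE (r, x'))) ^ (-(2 * lam)) * (u (toE (r, x'))) ^ 2 ≤
      C₀ * ∫ x' in (r ^ α) • B, ‖fderiv ℝ u (toE (r, x'))‖ ^ 2 := by
  set c : ℝ := r ^ α with hcdef
  have hc : 0 < c := Real.rpow_pos_of_pos hr.1 α
  -- scaling
  have scale : ∀ f : EuclideanSpace ℝ (Fin k) → ℝ,
      ∫ x' in c • B, f x' = c ^ k * ∫ y in B, f (c • y) := by
    intro f
    have h := Measure.setIntegral_comp_smul_of_pos (volume) f B hc
    rw [finrank_euclideanSpace_fin] at h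
    rw [h, smul_eq_mul, ← mul_assoc, mul_inv_cancel₀ (by positivity), one_mul]
  -- the slice function
  set v : EuclideanSpace ℝ (Fin k) → ℝ := fun y => u (toE (r, c • y)) with hvdef
  have hvc : ContDiff ℝ (⊤ : ℕ∞) v := v_contDiff r c hu
  have hvvan : ∀ y ∈ frontier B, v y = 0 := by
    intro y hy
    exact hvan _ ((mem_cusp_iff α (frontier B) r (c • y)).2 ⟨hr, y, hy, rfl⟩)
  have hP := hPoincare v hvc hvvan
  -- continuity helpers
  have hΦcont : Continuous fun y : EuclideanSpace ℝ (Fin k) => toE (r, c • y) := by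
    have hfun : (fun y : EuclideanSpace ℝ (Fin k) => toE (r, c • y)) =
        fun y => toE (r, 0) + (c • (Jmap k).toContinuousLinearMap) y := by
      funext y
      rw [toE_decomp r (c • y), (Jmap k).map_smul]
      rfl
    rw [hfun]
    exact continuous_const.add (c • (Jmap k).toContinuousLinearMap).continuous
  have hIntB : ∀ f : EuclideanSpace ℝ (Fin k) → ℝ, Continuous f → IntegrableOn f B := by
    intro f hf
    exact ((hf.continuousOn).integrableOn_compact hBbdd.isCompact_closure).mono_set
      subset_closure
  -- gradient comparison
  have hDucont : Continuous fun y : EuclideanSpace ℝ (Fin k) =>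
      ‖fderiv ℝ u (toE (r, c • y))‖ ^ 2 :=
    (((hu.continuous_fderiv (by simp)).comp hΦcont).norm).pow 2
  have hgrad : ∫ y in B, ‖fderiv ℝ v y‖ ^ 2 ≤
      ∫ y in B, c ^ 2 * ‖fderiv ℝ u (toE (r, c • y))‖ ^ 2 := by
    apply setIntegral_mono_on
    · exact hIntB _ (((hvc.continuous_fderiv (by simp)).norm).pow 2)
    · exact hIntB _ (continuous_const.mul hDucont)
    · exact hBmeas
    · intro y _
      have h1 := v_fderiv_norm_le r c hu y
      rw [abs_of_pos hc] at h1
      have h2 : ‖fderiv ℝ v y‖ ^ 2 ≤ (c * ‖fderiv ℝ u (toE (r, c • y))‖) ^ 2 := by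
        apply pow_le_pow_left₀ (norm_nonneg _) h1
      calc ‖fderiv ℝ v y‖ ^ 2 ≤ (c * ‖fderiv ℝ u (toE (r, c • y))‖) ^ 2 := h2
        _ = c ^ 2 * ‖fderiv ℝ u (toE (r, c • y))‖ ^ 2 := by ring
  -- rewrite both sides via scaling
  have hL : ∫ x' in c • B, (firstCoord (toE (r, x'))) ^ (-(2 * lam)) * (u (toE (r, x'))) ^ 2
      = c ^ k * ∫ y in B, r ^ (-(2 * lam)) * (v y) ^ 2 := by
    rw [scale fun x' => (firstCoord (toE (r, x'))) ^ (-(2 * lam)) * (u (toE (r, x'))) ^ 2]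
    congr 1
  have hR : ∫ x' in c • B, ‖fderiv ℝ u (toE (r, x'))‖ ^ 2
      = c ^ k * ∫ y in B, ‖fderiv ℝ u (toE (r, c • y))‖ ^ 2 :=
    scale fun x' => ‖fderiv ℝ u (toE (r, x'))‖ ^ 2
  set I : ℝ := ∫ y in B, ‖fderiv ℝ u (toE (r, c • y))‖ ^ 2 with hIdef
  set S : ℝ := ∫ y in B, (v y) ^ 2 with hSdef
  have hI0 : 0 ≤ I := setIntegral_nonneg hBmeas fun y _ => by positivity
  have hS0 : 0 ≤ S := setIntegral_nonneg hBmeas fun y _ => by positivity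
  set w : ℝ := r ^ (-(2 * lam)) with hwdef
  have hw0 : 0 ≤ w := Real.rpow_nonneg hr.1.le _
  have hc2 : c ^ 2 = r ^ (α * 2) := by
    rw [hcdef, Real.rpow_mul hr.1.le, show (2 : ℝ) = ((2 : ℕ) : ℝ) by norm_num,
      Real.rpow_natCast]
  have hwc : w * c ^ 2 ≤ 1 := by
    rw [hwdef, hc2, ← Real.rpow_add hr.1]
    exact Real.rpow_le_one hr.1.le hr.2.le (by linarith)
  have hmid : ∫ y in B, c ^ 2 * ‖fderiv ℝ u (toE (r, c • y))‖ ^ 2 = c ^ 2 * I := by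
    rw [hIdef]
    exact integral_const_mul _ _
  have hcomb : S ≤ C₀ * (c ^ 2 * I) := by
    calc S ≤ C₀ * ∫ y in B, ‖fderiv ℝ v y‖ ^ 2 := hP
      _ ≤ C₀ * (c ^ 2 * I) := by
          apply mul_le_mul_of_nonneg_left _ hC₀.le
          rw [← hmid]
          exact hgrad
  rw [hL, hR, integral_const_mul]
  calc c ^ k * (w * S) ≤ c ^ k * (w * (C₀ * (c ^ 2 * I))) := by gcongr
    _ = (C₀ * I) * (w * c ^ 2) * c ^ k := by ring
    _ ≤ (C₀ * I) * 1 * c ^ k := by gcongr <;> positivity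
    _ = C₀ * (c ^ k * I) := by ring

set_option maxHeartbeats 1000000 in
theorem aux_main {k : ℕ} (α lam : ℝ) (hα : 1 ≤ α) (hlam : lam ≤ α)
    (B : Set (EuclideanSpace ℝ (Fin k))) (hBopen : IsOpen B)
    (hBbdd : Bornology.IsBounded B) (C₀ : ℝ) (hC₀ : 0 < C₀)
    (hPoincare : ∀ v : EuclideanSpace ℝ (Fin k) → ℝ, ContDiff ℝ (⊤ : ℕ∞) v →
      (∀ y ∈ frontier B, v y = 0) →
      ∫ y in B, (v y) ^ 2 ≤ C₀ * ∫ y in B, ‖fderiv ℝ v y‖ ^ 2)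
    (u : EuclideanSpace ℝ (Fin (k + 1)) → ℝ) (hu : ContDiff ℝ (⊤ : ℕ∞) u)
    (hcs : HasCompactSupport u)
    (hsupp : tsupport u ⊆ modelCusp (k + 1) α (closure B))
    (hvan : ∀ x ∈ modelCusp (k + 1) α (frontier B), u x = 0) :
    ∫ x in modelCusp (k + 1) α B, (firstCoord x) ^ (-(2 * lam)) * (u x) ^ 2 ≤
      C₀ * ∫ x in modelCusp (k + 1) α B, ‖fderiv ℝ u x‖ ^ 2 := by
  classical
  set K := modelCusp (k + 1) α B with hKdef
  have hKopen : IsOpen K := cusp_open α B hBopen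
  have hKm : MeasurableSet K := hKopen.measurableSet
  have hfc : Continuous (firstCoord : EuclideanSpace ℝ (Fin (k + 1)) → ℝ) := by
    unfold firstCoord
    simp only [dif_pos (Nat.succ_pos k)]
    exact PiLp.continuous_apply 2 _ _
  set g₁ : EuclideanSpace ℝ (Fin (k + 1)) → ℝ :=
    fun x => (firstCoord x) ^ (-(2 * lam)) * (u x) ^ 2 with hg₁def
  set g₂ : EuclideanSpace ℝ (Fin (k + 1)) → ℝ := fun x => ‖fderiv ℝ u x‖ ^ 2 with hg₂def
  -- trivial case `u = 0`
  by_cases hne : tsupport u = ∅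
  · have hu0 : u = 0 := tsupport_eq_empty_iff.mp hne
    have h1 : ∀ x, g₁ x = 0 := by intro x; simp [hg₁def, hu0]
    have h2 : ∀ x, g₂ x = 0 := by
      intro x
      have : fderiv ℝ u = fun _ => 0 := by
        funext z
        rw [hu0]
        exact fderiv_const_apply 0
      simp [hg₂def, this]
    simp only [hg₁def, hg₂def] at h1 h2
    calc ∫ x in K, (firstCoord x) ^ (-(2 * lam)) * (u x) ^ 2 = 0 := by
          rw [show (fun x => (firstCoord x) ^ (-(2 * lam)) * (u x) ^ 2) =
            (fun _ => (0:ℝ)) from funext h1]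
          simp
      _ ≤ C₀ * ∫ x in K, ‖fderiv ℝ u x‖ ^ 2 := by
          rw [show (fun x : EuclideanSpace ℝ (Fin (k+1)) => ‖fderiv ℝ u x‖ ^ 2) =
            (fun _ => (0:ℝ)) from funext h2]
          simp
  -- main case
  have htsne : (tsupport u).Nonempty := Set.nonempty_iff_ne_empty.mpr hne
  obtain ⟨x₀, hx₀mem, hx₀min⟩ := hcs.exists_isMinOn htsne hfc.continuousOn
  have hfc_mem : ∀ (S : Set (EuclideanSpace ℝ (Fin k)))
      (x : EuclideanSpace ℝ (Fin (k + 1))), x ∈ modelCusp (k + 1) α S →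
      firstCoord x ∈ Set.Ioo (0:ℝ) 1 := by
    intro S x hx
    obtain ⟨r, y, hy, h0, h1, hco⟩ := hx
    have h00 : x 0 = r := by simpa using hco 0
    have : firstCoord x = x 0 := by
      unfold firstCoord
      rw [dif_pos (Nat.succ_pos k)]
      rfl
    rw [this, h00]
    exact ⟨h0, h1⟩
  set ε : ℝ := firstCoord x₀ with hεdef
  have hε : 0 < ε := (hfc_mem _ _ (hsupp hx₀mem)).1
  set M : ℝ := max 1 (ε ^ (-(2 * lam))) with hMdef
  -- integrability of g₁ on K
  have hu2int : Integrable (fun x => M * (u x) ^ 2) := by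
    apply Integrable.const_mul
    apply Continuous.integrable_of_hasCompactSupport ((hu.continuous).pow 2)
    exact hcs.comp_left (g := fun t : ℝ => t ^ 2) (by simp)
  have hg₁meas : AEStronglyMeasurable g₁ (volume.restrict K) := by
    have hmeas : Measurable fun x : EuclideanSpace ℝ (Fin (k + 1)) =>
        Real.exp (Real.log (firstCoord x) * (-(2 * lam))) * (u x) ^ 2 := by
      apply Measurable.mul
      · exact Real.measurable_exp.comp ((Real.measurable_log.comp hfc.measurable).mul_const _)
      · exact (hu.continuous.measurable).pow_const 2
    apply hmeas.aestronglyMeasurable.congr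
    apply (ae_restrict_of_forall_mem hKm _)
    intro x hx
    have hx0 : 0 < firstCoord x := (hfc_mem B x hx).1
    simp only [hg₁def]
    rw [Real.rpow_def_of_pos hx0]
  have hg₁bound : ∀ x ∈ K, ‖g₁ x‖ ≤ M * (u x) ^ 2 := by
    intro x hx
    have hfx := hfc_mem B x hx
    have hw0 : 0 ≤ (firstCoord x) ^ (-(2 * lam)) := Real.rpow_nonneg hfx.1.le _
    rw [hg₁def]
    simp only [Real.norm_eq_abs]
    rw [abs_of_nonneg (by positivity)]
    by_cases hxu : u x = 0
    · rw [hxu]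
      simp only [ne_eq, OfNat.ofNat_ne_zero, not_false_eq_true, zero_pow, mul_zero]
      positivity
    · have hxsupp : x ∈ tsupport u := subset_closure (by exact hxu)
      have hεx : ε ≤ firstCoord x := hx₀min hxsupp
      have hwM : (firstCoord x) ^ (-(2 * lam)) ≤ M := by
        rcases le_or_gt 0 (-(2 * lam)) with hcase | hcase
        · calc (firstCoord x) ^ (-(2 * lam)) ≤ 1 :=
                Real.rpow_le_one hfx.1.le hfx.2.le hcase
            _ ≤ M := le_max_left _ _
        · calc (firstCoord x) ^ (-(2 * lam)) ≤ ε ^ (-(2 * lam)) :=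
                Real.rpow_le_rpow_of_nonpos hε hεx hcase.le
            _ ≤ M := le_max_right _ _
      have hu2 : 0 ≤ (u x) ^ 2 := sq_nonneg _
      exact mul_le_mul_of_nonneg_right hwM hu2
  have hg₁int : IntegrableOn g₁ K volume := by
    apply Integrable.mono' (hu2int.restrict (s := K)) hg₁meas
    exact ae_restrict_of_forall_mem hKm hg₁bound
  have hg₂cont : Continuous g₂ := ((hu.continuous_fderiv (by simp)).norm).pow 2
  have hg₂int : IntegrableOn g₂ K volume := by
    apply Integrable.integrableOn
    apply Continuous.integrable_of_hasCompactSupport hg₂cont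
    exact (hcs.fderiv ℝ).comp_left (g := fun t => ‖t‖ ^ 2) (by simp)
  -- transfer to the product space
  have hmp := measurePreserving_toE (k := k)
  have hemb := measurableEmbedding_toE (k := k)
  have hsm : MeasurableSet (toE ⁻¹' K : Set (ℝ × EuclideanSpace ℝ (Fin k))) :=
    hemb.measurable hKm
  have hslice_meas : ∀ r : ℝ,
      MeasurableSet {x' : EuclideanSpace ℝ (Fin k) | toE (r, x') ∈ K} := by
    intro r
    have hcontr : Continuous fun x' : EuclideanSpace ℝ (Fin k) => toE (r, x') := by
      have hfun : (fun x' : EuclideanSpace ℝ (Fin k) => toE (r, x')) =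
          fun x' => toE (r, 0) + (Jmap k).toContinuousLinearMap x' := by
        funext x'
        rw [toE_decomp r x']
        rfl
      rw [hfun]
      exact continuous_const.add (Jmap k).toContinuousLinearMap.continuous
    exact (hKopen.preimage hcontr).measurableSet
  have key : ∀ g : EuclideanSpace ℝ (Fin (k + 1)) → ℝ, IntegrableOn g K volume →
      ((∫ x in K, g x) =
        ∫ r : ℝ, ∫ x' in {x' | toE (r, x') ∈ K}, g (toE (r, x'))) ∧
      Integrable (fun r : ℝ => ∫ x' in {x' | toE (r, x') ∈ K}, g (toE (r, x'))) := by
    intro g hg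
    have hgs : IntegrableOn (fun z => g (toE z)) (toE ⁻¹' K) volume :=
      (hmp.integrableOn_comp_preimage hemb).mpr hg
    have hind : Integrable ((toE ⁻¹' K).indicator fun z => g (toE z)) volume :=
      (integrable_indicator_iff hsm).2 hgs
    have hindP : Integrable ((toE ⁻¹' K).indicator fun z => g (toE z))
        ((volume : Measure ℝ).prod volume) := by rwa [← Measure.volume_eq_prod]
    have hsec : ∀ r : ℝ, (fun x' => (toE ⁻¹' K).indicator (fun z => g (toE z)) (r, x')) =
        ({x' | toE (r, x') ∈ K}).indicator fun x' => g (toE (r, x')) := by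
      intro r
      funext x'
      by_cases hx : toE (r, x') ∈ K
      · rw [Set.indicator_of_mem (show (r, x') ∈ toE ⁻¹' K from hx),
          Set.indicator_of_mem (show x' ∈ {x' | toE (r, x') ∈ K} from hx)]
      · rw [Set.indicator_of_notMem (show (r, x') ∉ toE ⁻¹' K from hx),
          Set.indicator_of_notMem (show x' ∉ {x' | toE (r, x') ∈ K} from hx)]
    have heq : (fun r : ℝ => ∫ x', (toE ⁻¹' K).indicator (fun z => g (toE z)) (r, x')) =
        fun r => ∫ x' in {x' | toE (r, x') ∈ K}, g (toE (r, x')) := by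
      funext r
      rw [hsec r]
      exact integral_indicator (hslice_meas r)
    constructor
    · calc ∫ x in K, g x = ∫ z in toE ⁻¹' K, g (toE z) :=
            (hmp.setIntegral_preimage_emb hemb g K).symm
        _ = ∫ z : ℝ × _, (toE ⁻¹' K).indicator (fun z => g (toE z)) z :=
            (integral_indicator hsm).symm
        _ = ∫ r : ℝ, ∫ x', (toE ⁻¹' K).indicator (fun z => g (toE z)) (r, x') := by
            rw [Measure.volume_eq_prod]
            exact integral_prod _ hindP
        _ = ∫ r : ℝ, ∫ x' in {x' | toE (r, x') ∈ K}, g (toE (r, x')) := by rw [heq]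
    · rw [← heq]
      exact hindP.integral_prod_left
  obtain ⟨he₁, hi₁⟩ := key g₁ hg₁int
  obtain ⟨he₂, hi₂⟩ := key g₂ hg₂int
  have hpt : ∀ r : ℝ, (∫ x' in {x' | toE (r, x') ∈ K}, g₁ (toE (r, x'))) ≤
      C₀ * ∫ x' in {x' | toE (r, x') ∈ K}, g₂ (toE (r, x')) := by
    intro r
    by_cases hr : r ∈ Set.Ioo (0 : ℝ) 1
    · rw [hKdef, slice_smul α B hr]
      exact slice_ineq α lam hα hlam B hBbdd hBopen.measurableSet C₀ hC₀ hPoincare u hu hvan hr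
    · rw [hKdef, slice_empty α B hr]
      simp
  calc ∫ x in K, g₁ x
      = ∫ r : ℝ, ∫ x' in {x' | toE (r, x') ∈ K}, g₁ (toE (r, x')) := he₁
    _ ≤ ∫ r : ℝ, C₀ * ∫ x' in {x' | toE (r, x') ∈ K}, g₂ (toE (r, x')) :=
        integral_mono hi₁ (hi₂.const_mul C₀) hpt
    _ = C₀ * ∫ r : ℝ, ∫ x' in {x' | toE (r, x') ∈ K}, g₂ (toE (r, x')) :=
        integral_const_mul _ _
    _ = C₀ * ∫ x in K, g₂ x := by rw [he₂]

/-- **Hardy–Poincaré inequality on a model cusp.** If `B ⊆ ℝ^{m-1}` is a nonempty bounded open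
set satisfying the Poincaré inequality with constant `C₀` (for smooth functions vanishing on the
frontier of `B`), `α ≥ 1` and `λ ≤ α`, then on the model cusp `K = K_α^m(B)` one has
`∫_K x₁^{-2λ} |u|² dx ≤ C₀ ∫_K |∇u|² dx` for all smooth `u` supported in
`{(r, r^α y) : 0 < r < 1, y ∈ closure B}` and vanishing on the lateral boundary. -/
theorem hardy_poincare_model_cusp (m : ℕ) (hm : 2 ≤ m) (α lam : ℝ) (hα : 1 ≤ α)
    (hlam : lam ≤ α)
    (B : Set (EuclideanSpace ℝ (Fin (m - 1)))) (hBne : B.Nonempty) (hBopen : IsOpen B)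
    (hBbdd : Bornology.IsBounded B) (C₀ : ℝ) (hC₀ : 0 < C₀)
    (hPoincare : ∀ v : EuclideanSpace ℝ (Fin (m - 1)) → ℝ, ContDiff ℝ (⊤ : ℕ∞) v →
      (∀ y ∈ frontier B, v y = 0) →
      ∫ y in B, (v y) ^ 2 ≤ C₀ * ∫ y in B, ‖fderiv ℝ v y‖ ^ 2) :
    ∀ u : EuclideanSpace ℝ (Fin m) → ℝ, ContDiff ℝ (⊤ : ℕ∞) u → HasCompactSupport u →
      tsupport u ⊆ modelCusp m α (closure B) →
      (∀ x ∈ modelCusp m α (frontier B), u x = 0) →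
      ∫ x in modelCusp m α B, (firstCoord x) ^ (-(2 * lam)) * (u x) ^ 2 ≤
        C₀ * ∫ x in modelCusp m α B, ‖fderiv ℝ u x‖ ^ 2 := by

  obtain ⟨k, rfl⟩ : ∃ k, m = k + 1 := ⟨m - 1, by omega⟩
  intro u hu hcs hsupp hvan
  exact aux_main α lam hα hlam B hBopen hBbdd C₀ hC₀ hPoincare u hu hcs hsupp hvan
end

section
/- Let V := {(x, y) ∈ ℝ² : 0 < x < 1, 0 < y < 1 − √(1 − x²)} be the cuspidal planar region between the x-axis and the circle of radius 1 centered at (0, 1). Then there exists C > 0 such that for every u ∈ C_c^∞(V) one has ∫_V (x² + y²)^{-2} |u(x, y)|² dx dy ≤ C ∫_V |∇u(x, y)|² dx dy. (This is the Hardy–Poincaré inequality with weight ρ ∼ r², r the distance to the cusp point at the origin, for this non-canonical cuspidal domain.) -/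
open MeasureTheory Real

/-- The cuspidal planar region `V = {(x, y) : 0 < x < 1, 0 < y < 1 − √(1 − x²)}` between the
`x`-axis and the circle of radius `1` centered at `(0, 1)`. -/
noncomputable def cuspRegionV : Set (EuclideanSpace ℝ (Fin 2)) :=
  {p | 0 < p 0 ∧ p 0 < 1 ∧ 0 < p 1 ∧ p 1 < 1 - Real.sqrt (1 - (p 0) ^ 2)}

open Set

noncomputable def psiE : EuclideanSpace ℝ (Fin 2) ≃ᵐ ℝ × ℝ :=
  (MeasurableEquiv.toLp 2 (Fin 2 → ℝ)).symm.trans (MeasurableEquiv.finTwoArrow)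

lemma psiE_mp : MeasurePreserving psiE :=
  (volume_preserving_finTwoArrow ℝ).comp (EuclideanSpace.volume_preserving_symm_measurableEquiv_toLp _)

lemma psiE_symm_mp : MeasurePreserving (⇑psiE.symm) volume volume :=
  psiE_mp.symm

lemma sq_setIntegral_le {f : ℝ → ℝ} {a b : ℝ} (hab : a ≤ b)
    (hf : IntegrableOn f (Ioc a b)) (hf2 : IntegrableOn (fun t => f t ^ 2) (Ioc a b)) :
    (∫ t in Ioc a b, f t) ^ 2 ≤ (b - a) * ∫ t in Ioc a b, f t ^ 2 := by
  rcases eq_or_lt_of_le hab with rfl | hab'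
  · simp
  set I := ∫ t in Ioc a b, f t with hI
  set J := ∫ t in Ioc a b, f t ^ 2 with hJ
  have hm : volume.real (Ioc a b) = b - a := by
    rw [measureReal_def, Real.volume_Ioc, ENNReal.toReal_ofReal (by linarith)]
  have key : 0 ≤ ∫ t in Ioc a b, ((b - a) * f t - I) ^ 2 :=
    integral_nonneg fun t => sq_nonneg _
  have expand : ∫ t in Ioc a b, ((b - a) * f t - I) ^ 2
      = (b - a) ^ 2 * J - 2 * (b - a) * I * I + I ^ 2 * (b - a) := by
    have hfn : (fun t => ((b - a) * f t - I) ^ 2)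
        = fun t => ((b - a) ^ 2 * f t ^ 2 - (2 * (b - a) * I) * f t) + I ^ 2 := by
      funext t; ring
    have hint1 : IntegrableOn (fun t => (b - a) ^ 2 * f t ^ 2) (Ioc a b) := hf2.const_mul _
    have hint2 : IntegrableOn (fun t => (2 * (b - a) * I) * f t) (Ioc a b) := hf.const_mul _
    have hint3 : IntegrableOn (fun t => (b - a) ^ 2 * f t ^ 2 - (2 * (b - a) * I) * f t)
        (Ioc a b) := hint1.sub hint2
    have hint4 : IntegrableOn (fun _ : ℝ => I ^ 2) (Ioc a b) :=
      integrableOn_const (by rw [Real.volume_Ioc]; exact ENNReal.ofReal_ne_top)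
    rw [hfn, integral_add hint3 hint4, integral_sub hint1 hint2, integral_const_mul,
      integral_const_mul, setIntegral_const, smul_eq_mul, hm]
    ring
  have h2 : 0 ≤ (b - a) ^ 2 * J - 2 * (b - a) * I * I + I ^ 2 * (b - a) := expand ▸ key
  nlinarith [h2, hab', sq_nonneg I]

lemma line_eq (x : ℝ) : (fun y : ℝ => psiE.symm (x, y)) =
    fun y => (EuclideanSpace.single (0 : Fin 2) x) + y • (EuclideanSpace.single (1 : Fin 2) (1:ℝ)) := by
  funext y
  ext i
  fin_cases i <;>
    simp [EuclideanSpace.single_apply, PiLp.add_apply, PiLp.smul_apply] <;> rfl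

lemma line_isometry (x : ℝ) : Isometry (fun y : ℝ => psiE.symm (x, y)) := by
  rw [line_eq]
  refine Isometry.of_dist_eq fun y z => ?_
  rw [dist_eq_norm, dist_eq_norm]
  have h : ((EuclideanSpace.single (0 : Fin 2) x) + y • (EuclideanSpace.single (1 : Fin 2) (1:ℝ)))
      - ((EuclideanSpace.single (0 : Fin 2) x) + z • (EuclideanSpace.single (1 : Fin 2) (1:ℝ)))
      = (y - z) • (EuclideanSpace.single (1 : Fin 2) (1:ℝ)) := by module
  rw [h, norm_smul, EuclideanSpace.norm_single, norm_one, mul_one]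

lemma line_hasDerivAt (x y : ℝ) :
    HasDerivAt (fun y : ℝ => psiE.symm (x, y)) (EuclideanSpace.single (1 : Fin 2) (1:ℝ)) y := by
  rw [line_eq]
  simpa using ((hasDerivAt_id y).smul_const (EuclideanSpace.single (1 : Fin 2) (1:ℝ))).const_add
    (EuclideanSpace.single (0 : Fin 2) x)


lemma u_zero_of_not_mem {u : EuclideanSpace ℝ (Fin 2) → ℝ} (hsub : tsupport u ⊆ cuspRegionV)
    {p} (hp : p ∉ cuspRegionV) : u p = 0 :=
  image_eq_zero_of_notMem_tsupport fun h => hp (hsub h)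

lemma line_ineq (u : EuclideanSpace ℝ (Fin 2) → ℝ) (hu : ContDiff ℝ (⊤ : ℕ∞) u)
    (hcs : HasCompactSupport u) (hsub : tsupport u ⊆ cuspRegionV) (x : ℝ) :
    ∫ y : ℝ, ((x ^ 2 + y ^ 2) ^ 2)⁻¹ * u (psiE.symm (x, y)) ^ 2
      ≤ (1/2) * ∫ y : ℝ, ‖fderiv ℝ u (psiE.symm (x, y))‖ ^ 2 := by
  have hlineC : Continuous (fun y : ℝ => psiE.symm (x, y)) := (line_isometry x).continuous
  have hGc : Continuous (fun y : ℝ => ‖fderiv ℝ u (psiE.symm (x, y))‖ ^ 2) :=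
    (((hu.continuous_fderiv (by simp)).comp hlineC).norm.pow 2)
  have hGcs : HasCompactSupport (fun y : ℝ => ‖fderiv ℝ u (psiE.symm (x, y))‖ ^ 2) := by
    have h1 : HasCompactSupport (fun y : ℝ => fderiv ℝ u (psiE.symm (x, y))) :=
      (hcs.fderiv ℝ).comp_isClosedEmbedding (line_isometry x).isClosedEmbedding
    exact h1.comp_left (g := fun v : EuclideanSpace ℝ (Fin 2) →L[ℝ] ℝ => ‖v‖ ^ 2) (by simp)
  have hGint : Integrable (fun y : ℝ => ‖fderiv ℝ u (psiE.symm (x, y))‖ ^ 2) :=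
    hGc.integrable_of_hasCompactSupport hGcs
  have hGnn : (0:ℝ) ≤ ∫ y : ℝ, ‖fderiv ℝ u (psiE.symm (x, y))‖ ^ 2 :=
    integral_nonneg fun y => by positivity
  by_cases hx : 0 < x ∧ x < 1
  · obtain ⟨hx0, hx1⟩ := hx
    set h := 1 - Real.sqrt (1 - x ^ 2) with hh
    set g : ℝ → ℝ := fun y => u (psiE.symm (x, y)) with hgdef
    have hgsm : ContDiff ℝ (⊤ : ℕ∞) g := by
      refine hu.comp ?_
      rw [line_eq]
      exact contDiff_const.add (contDiff_id.smul contDiff_const)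
    have hgcs : HasCompactSupport g :=
      hcs.comp_isClosedEmbedding (line_isometry x).isClosedEmbedding
    have hDcont : Continuous (deriv g) := hgsm.continuous_deriv (by simp)
    have hD2cs : HasCompactSupport (fun t => deriv g t ^ 2) :=
      hgcs.deriv.comp_left (g := fun s : ℝ => s ^ 2) (by simp)
    have hD2int : Integrable (fun t => deriv g t ^ 2) :=
      (hDcont.pow 2).integrable_of_hasCompactSupport hD2cs
    set A := ∫ t : ℝ, deriv g t ^ 2 with hA
    have hA0 : 0 ≤ A := integral_nonneg fun t => sq_nonneg _
    have hDb : ∀ y : ℝ, deriv g y ^ 2 ≤ ‖fderiv ℝ u (psiE.symm (x, y))‖ ^ 2 := by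
      intro y
      have hd : HasDerivAt g
          (fderiv ℝ u (psiE.symm (x, y)) (EuclideanSpace.single (1 : Fin 2) (1:ℝ))) y :=
        ((hu.differentiable (by simp) _).hasFDerivAt).comp_hasDerivAt y (line_hasDerivAt x y)
      rw [hd.deriv]
      have h1 : |fderiv ℝ u (psiE.symm (x, y)) (EuclideanSpace.single (1 : Fin 2) (1:ℝ))|
          ≤ ‖fderiv ℝ u (psiE.symm (x, y))‖ := by
        rw [← Real.norm_eq_abs]
        calc ‖fderiv ℝ u (psiE.symm (x, y)) (EuclideanSpace.single (1 : Fin 2) (1:ℝ))‖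
            ≤ ‖fderiv ℝ u (psiE.symm (x, y))‖ * ‖EuclideanSpace.single (1 : Fin 2) (1:ℝ)‖ :=
              (fderiv ℝ u (psiE.symm (x, y))).le_opNorm _
          _ = ‖fderiv ℝ u (psiE.symm (x, y))‖ := by simp
      calc (fderiv ℝ u (psiE.symm (x, y)) (EuclideanSpace.single (1 : Fin 2) (1:ℝ))) ^ 2
          = |fderiv ℝ u (psiE.symm (x, y)) (EuclideanSpace.single (1 : Fin 2) (1:ℝ))| ^ 2 :=
            (sq_abs _).symm
        _ ≤ ‖fderiv ℝ u (psiE.symm (x, y))‖ ^ 2 := pow_le_pow_left₀ (abs_nonneg _) h1 2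
    have hAleG : A ≤ ∫ y : ℝ, ‖fderiv ℝ u (psiE.symm (x, y))‖ ^ 2 :=
      integral_mono hD2int hGint hDb
    have hg0 : ∀ y : ℝ, y ∉ Ioo (0:ℝ) h → g y = 0 := by
      intro y hy
      exact u_zero_of_not_mem hsub fun hmem => hy ⟨hmem.2.2.1, hmem.2.2.2⟩
    have hx2 : 0 ≤ 1 - x ^ 2 := by nlinarith
    have hsq1 : Real.sqrt (1 - x ^ 2) < 1 := by
      have := Real.sqrt_lt_sqrt hx2 (show 1 - x ^ 2 < 1 by nlinarith)
      simpa using this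
    have hh0 : 0 < h := by rw [hh]; linarith
    have hhx : h ≤ x ^ 2 := by
      have := Real.sq_sqrt hx2
      nlinarith [Real.sqrt_nonneg (1 - x ^ 2), hsq1.le]
    have hgsq : ∀ y ∈ Ioo (0:ℝ) h, g y ^ 2 ≤ y * A := by
      intro y hy
      have hg00 : g 0 = 0 := hg0 0 (by simp)
      have hftc : ∫ t in (0:ℝ)..y, deriv g t = g y := by
        rw [intervalIntegral.integral_deriv_eq_sub
          (fun t _ => hgsm.differentiable (by simp) t)
          (hDcont.intervalIntegrable 0 y), hg00, sub_zero]
      have hIoc : ∫ t in (0:ℝ)..y, deriv g t = ∫ t in Ioc (0:ℝ) y, deriv g t :=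
        intervalIntegral.integral_of_le hy.1.le
      have hcs2 : (∫ t in Ioc (0:ℝ) y, deriv g t) ^ 2
          ≤ (y - 0) * ∫ t in Ioc (0:ℝ) y, deriv g t ^ 2 :=
        sq_setIntegral_le hy.1.le (hDcont.integrable_of_hasCompactSupport
          hgcs.deriv).integrableOn hD2int.integrableOn
      have hB : ∫ t in Ioc (0:ℝ) y, deriv g t ^ 2 ≤ A :=
        setIntegral_le_integral hD2int (Filter.Eventually.of_forall fun t => sq_nonneg _)
      calc g y ^ 2 = (∫ t in Ioc (0:ℝ) y, deriv g t) ^ 2 := by rw [← hIoc, hftc]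
        _ ≤ (y - 0) * ∫ t in Ioc (0:ℝ) y, deriv g t ^ 2 := hcs2
        _ ≤ y * A := by
            rw [sub_zero]
            exact mul_le_mul_of_nonneg_left hB hy.1.le
    have hx4 : (0:ℝ) < x ^ 4 := by positivity
    have hFc : Continuous (fun y : ℝ => ((x ^ 2 + y ^ 2) ^ 2)⁻¹ * g y ^ 2) := by
      refine Continuous.mul ?_ ((hgsm.continuous).pow 2)
      exact Continuous.inv₀ ((continuous_const.add (continuous_pow 2)).pow 2) fun y => by positivity
    have hFcs : HasCompactSupport (fun y : ℝ => ((x ^ 2 + y ^ 2) ^ 2)⁻¹ * g y ^ 2) :=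
      (hgcs.comp_left (g := fun s : ℝ => s ^ 2) (by simp)).mul_left
    have hFint : Integrable (fun y : ℝ => ((x ^ 2 + y ^ 2) ^ 2)⁻¹ * g y ^ 2) :=
      hFc.integrable_of_hasCompactSupport hFcs
    have hlin : IntegrableOn (fun y : ℝ => (x ^ 4)⁻¹ * A * y) (Ioo (0:ℝ) h) :=
      ((continuous_const.mul continuous_id).integrableOn_Ioc).mono_set Ioo_subset_Ioc_self
    calc ∫ y : ℝ, ((x ^ 2 + y ^ 2) ^ 2)⁻¹ * u (psiE.symm (x, y)) ^ 2
        = ∫ y in Ioo (0:ℝ) h, ((x ^ 2 + y ^ 2) ^ 2)⁻¹ * g y ^ 2 :=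
          (setIntegral_eq_integral_of_forall_compl_eq_zero fun y hy => by
            rw [show u (psiE.symm (x, y)) = 0 from hg0 y hy]; ring).symm
      _ ≤ ∫ y in Ioo (0:ℝ) h, (x ^ 4)⁻¹ * A * y := by
          refine setIntegral_mono_on hFint.integrableOn hlin measurableSet_Ioo fun y hy => ?_
          have e1 : ((x ^ 2 + y ^ 2) ^ 2)⁻¹ ≤ (x ^ 4)⁻¹ := by
            refine inv_anti₀ hx4 (by nlinarith [sq_nonneg y])
          have e2 : g y ^ 2 ≤ y * A := hgsq y hy
          calc ((x ^ 2 + y ^ 2) ^ 2)⁻¹ * g y ^ 2 ≤ (x ^ 4)⁻¹ * (y * A) :=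
                mul_le_mul e1 e2 (sq_nonneg _) (by positivity)
            _ = (x ^ 4)⁻¹ * A * y := by ring
      _ = (x ^ 4)⁻¹ * A * (h ^ 2 / 2) := by
          rw [← integral_Ioc_eq_integral_Ioo, ← intervalIntegral.integral_of_le hh0.le,
            intervalIntegral.integral_const_mul, integral_id]
          ring
      _ ≤ (1/2) * A := by
          have h4 : h ^ 2 ≤ x ^ 4 := by nlinarith
          have h5 : (x ^ 4)⁻¹ * h ^ 2 ≤ 1 := by
            rw [inv_mul_le_iff₀ hx4]; linarith
          nlinarith [mul_nonneg (inv_nonneg.2 hx4.le) hA0]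
      _ ≤ (1/2) * ∫ y : ℝ, ‖fderiv ℝ u (psiE.symm (x, y))‖ ^ 2 := by linarith
  · have hz : ∀ y : ℝ, u (psiE.symm (x, y)) = 0 := fun y =>
      u_zero_of_not_mem hsub fun hmem => hx ⟨hmem.1, hmem.2.1⟩
    simp only [hz]
    simp only [ne_eq, OfNat.ofNat_ne_zero, not_false_eq_true, zero_pow, mul_zero, integral_zero]
    positivity

/-- **Hardy–Poincaré inequality on a non-canonical cuspidal region.** There is `C > 0` such
that `∫_V (x² + y²)^{-2} |u|² ≤ C ∫_V |∇u|²` for every `u ∈ C_c^∞(V)`. -/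
theorem hardy_poincare_cusp_region :
    ∃ C : ℝ, 0 < C ∧ ∀ u : EuclideanSpace ℝ (Fin 2) → ℝ, ContDiff ℝ (⊤ : ℕ∞) u →
      HasCompactSupport u → tsupport u ⊆ cuspRegionV →
      ∫ p in cuspRegionV, (((p 0) ^ 2 + (p 1) ^ 2) ^ 2)⁻¹ * (u p) ^ 2 ≤
        C * ∫ p in cuspRegionV, ‖fderiv ℝ u p‖ ^ 2 := by
  refine ⟨1/2, by norm_num, fun u hu hcs hsub => ?_⟩
  set F : EuclideanSpace ℝ (Fin 2) → ℝ :=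
    fun p => (((p 0) ^ 2 + (p 1) ^ 2) ^ 2)⁻¹ * (u p) ^ 2 with hFdef
  set G : EuclideanSpace ℝ (Fin 2) → ℝ := fun p => ‖fderiv ℝ u p‖ ^ 2 with hGdef
  have hc0 : Continuous fun p : EuclideanSpace ℝ (Fin 2) => p 0 :=
    (EuclideanSpace.proj (0 : Fin 2)).continuous
  have hc1 : Continuous fun p : EuclideanSpace ℝ (Fin 2) => p 1 :=
    (EuclideanSpace.proj (1 : Fin 2)).continuous
  have hden : Continuous fun p : EuclideanSpace ℝ (Fin 2) => ((p 0) ^ 2 + (p 1) ^ 2) ^ 2 :=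
    ((hc0.pow 2).add (hc1.pow 2)).pow 2
  have hFc : Continuous F := by
    rw [continuous_iff_continuousAt]
    intro p
    by_cases hp : p ∈ tsupport u
    · have hppos : 0 < p 0 := (hsub hp).1
      have hne : ((p 0) ^ 2 + (p 1) ^ 2) ^ 2 ≠ 0 := by positivity
      exact ContinuousAt.mul (hden.continuousAt.inv₀ hne) ((hu.continuous.pow 2).continuousAt)
    · have hev : ∀ᶠ q in nhds p, q ∈ (tsupport u)ᶜ :=
        (isClosed_tsupport u).isOpen_compl.eventually_mem hp
      have heq : F =ᶠ[nhds p] fun _ => (0:ℝ) := by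
        filter_upwards [hev] with q hq
        simp only [hFdef]
        rw [image_eq_zero_of_notMem_tsupport hq]
        ring
      exact ContinuousAt.congr continuousAt_const heq.symm
  have hFcs : HasCompactSupport F := by
    refine hcs.mono fun p hp => ?_
    intro h0
    exact hp (by simp only [hFdef, h0]; ring)
  have hFint : Integrable F := hFc.integrable_of_hasCompactSupport hFcs
  have hGc : Continuous G := (hu.continuous_fderiv (by simp)).norm.pow 2
  have hGcs : HasCompactSupport G :=
    (hcs.fderiv ℝ).comp_left (g := fun v : EuclideanSpace ℝ (Fin 2) →L[ℝ] ℝ => ‖v‖ ^ 2) (by simp)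
  have hGint : Integrable G := hGc.integrable_of_hasCompactSupport hGcs
  have hFoff : ∀ p ∉ cuspRegionV, F p = 0 := by
    intro p hp
    simp only [hFdef]
    rw [u_zero_of_not_mem hsub hp]
    ring
  have hGoff : ∀ p ∉ cuspRegionV, G p = 0 := by
    intro p hp
    have : fderiv ℝ u p = 0 := by
      by_contra hne
      exact hp (hsub (support_fderiv_subset (𝕜 := ℝ) hne))
    simp [hGdef, this]
  have hemb : MeasurableEmbedding (psiE.symm : ℝ × ℝ → EuclideanSpace ℝ (Fin 2)) :=
    psiE.symm.measurableEmbedding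
  have hFq : Integrable ((fun q : ℝ × ℝ => F (psiE.symm q))) volume :=
    (psiE_symm_mp.integrable_comp_emb hemb).mpr hFint
  have hGq : Integrable ((fun q : ℝ × ℝ => G (psiE.symm q))) volume :=
    (psiE_symm_mp.integrable_comp_emb hemb).mpr hGint
  have hFq' : Integrable (fun q : ℝ × ℝ => F (psiE.symm q)) (volume.prod volume) := by
    rwa [← Measure.volume_eq_prod]
  have hGq' : Integrable (fun q : ℝ × ℝ => G (psiE.symm q)) (volume.prod volume) := by
    rwa [← Measure.volume_eq_prod]
  calc ∫ p in cuspRegionV, F p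
      = ∫ p, F p := setIntegral_eq_integral_of_forall_compl_eq_zero hFoff
    _ = ∫ q : ℝ × ℝ, F (psiE.symm q) := (psiE_symm_mp.integral_comp hemb F).symm
    _ = ∫ x : ℝ, ∫ y : ℝ, F (psiE.symm (x, y)) := by
        rw [Measure.volume_eq_prod ℝ ℝ]
        exact integral_prod _ hFq'
    _ ≤ ∫ x : ℝ, (1/2) * ∫ y : ℝ, G (psiE.symm (x, y)) := by
        refine integral_mono hFq'.integral_prod_left
          (hGq'.integral_prod_left.const_mul _) fun x => ?_
        exact line_ineq u hu hcs hsub x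
    _ = (1/2) * ∫ x : ℝ, ∫ y : ℝ, G (psiE.symm (x, y)) := integral_const_mul _ _
    _ = (1/2) * ∫ q : ℝ × ℝ, G (psiE.symm q) := by
        rw [Measure.volume_eq_prod ℝ ℝ]
        rw [integral_prod _ hGq']
    _ = (1/2) * ∫ p, G p := by rw [psiE_symm_mp.integral_comp hemb G]
    _ = (1/2) * ∫ p in cuspRegionV, G p := by
        rw [setIntegral_eq_integral_of_forall_compl_eq_zero hGoff]
end
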